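/- Let d ≥ 3 and k ≥ d−2 be integers. Then the Hilbert function of C[x,y]/(x^d, y^d, x^{d−1}y)^k in degree dk equals binomial(d−1, 2). -/

import Mathlib

open MvPolynomial

/-- The Hilbert function of the graded quotient `ℂ[x_1,…,x_n]/J` at degree `i`. -/
noncomputable def hilbertFunction {n : ℕ} (J : Ideal (MvPolynomial (Fin n) ℂ)) (i : ℕ) : ℕ :=
  Module.finrank ℂ (Submodule.map (Ideal.Quotient.mkₐ ℂ J).toLinearMap
    (homogeneousSubmodule (Fin n) ℂ i))

/-!
The ideal `(x^d, y^d, x^(d-1) y)^k` is spanned by monomials of degree `dk`, namely those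
`x^e y^(dk-e)` with `e ∈ k • {0, d-1, d} = {i(d-1) + jd | i + j ≤ k}`, so its Hilbert function in
degree `dk` counts the exponents `e ≤ dk` outside this set. Writing `e = sd + t` with `t < d`, and
using `k ≥ d - 2`, these are exactly the `e` with `t ≥ 1` and `s + t ≤ d - 2`, i.e. the pairs
`s < s + t < d - 1`, of which there are `C(d-1, 2)`.
-/

open Pointwise

theorem Submodule.finrank_map_add_finrank_inf_ker {K V W : Type*} [DivisionRing K]
    [AddCommGroup V] [Module K V] [AddCommGroup W] [Module K W] (f : V →ₗ[K] W)
    (p : Submodule K V) [FiniteDimensional K p] :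
    Module.finrank K (p.map f) + Module.finrank K ↥(p ⊓ LinearMap.ker f) =
      Module.finrank K p := by
  rw [← LinearMap.range_domRestrict, ← (f.domRestrict p).finrank_range_add_finrank_ker,
    LinearMap.ker_domRestrict, ← (Submodule.comapSubtypeEquivOfLe inf_le_left).finrank_eq,
    Submodule.comap_inf, Submodule.comap_subtype_self, top_inf_eq]

theorem AddMonoidAlgebra.finrank_supported {K M : Type*} [Field K] {s : Set M}
    (hs : s.Finite) : Module.finrank K (AddMonoidAlgebra.supported K K s) = s.ncard := by
  have := hs.fintype
  rw [(AddMonoidAlgebra.supportedEquivFinsupp s).finrank_eq, Module.finrank_finsupp_self,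
    Set.ncard_eq_toFinset_card', Set.toFinset_card]

theorem Finsupp.eq_of_le_of_degree_le {σ : Type*} {u v : σ →₀ ℕ} (h : u ≤ v)
    (hd : v.degree ≤ u.degree) : u = v := by
  have hv : v = u + (v - u) := (add_tsub_cancel_of_le h).symm
  have : (v - u).degree = 0 := by
    rw [hv, map_add] at hd; omega
  rw [Finsupp.degree_eq_zero_iff, tsub_eq_zero_iff_le] at this
  exact le_antisymm h this

theorem Finsupp.degree_eq_of_mem_nsmul {σ : Type*} {A : Set (σ →₀ ℕ)} {d k : ℕ}
    (hA : ∀ u ∈ A, u.degree = d) : ∀ u ∈ k • A, u.degree = k * d := by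
  have himage : Finsupp.degree '' A ⊆ {d} := by
    rintro _ ⟨u, hu, rfl⟩
    exact hA u hu
  intro u hu
  have : u.degree ∈ k • ({d} : Set ℕ) :=
    Set.nsmul_subset_nsmul_left himage (Set.image_nsmul Finsupp.degree A k ▸ ⟨u, hu, rfl⟩)
  simpa using this

theorem Finsupp.degree_fin_two (u : Fin 2 →₀ ℕ) : u.degree = u 0 + u 1 := by
  rw [Finsupp.degree_eq_sum, Fin.sum_univ_two]

theorem Finsupp.injOn_apply_zero_degree_eq (n : ℕ) :
    Set.InjOn (fun u : Fin 2 →₀ ℕ => u 0) {u | u.degree = n} := by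
  intro u hu v hv h
  simp only [Set.mem_ofPred_eq, degree_fin_two] at hu hv h
  exact Finsupp.ext (Fin.forall_fin_two.2 ⟨h, by omega⟩)

theorem Finsupp.image_apply_zero_degree_eq (n : ℕ) :
    (fun u : Fin 2 →₀ ℕ => u 0) '' {u | u.degree = n} = Set.Iic n := by
  ext e
  constructor
  · rintro ⟨u, hu, rfl⟩
    simp only [Set.mem_ofPred_eq, degree_fin_two] at hu
    simp only [Set.mem_Iic]
    omega
  · intro he
    refine ⟨single 0 e + single 1 (n - e), ?_, by simp⟩
    rw [Set.mem_Iic] at he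
    rw [Set.mem_ofPred_eq, map_add, degree_single, degree_single]
    omega

theorem MvPolynomial.span_monomial_image_pow {σ R : Type*} [CommSemiring R]
    (A : Set (σ →₀ ℕ)) (k : ℕ) :
    Ideal.span ((fun u => monomial u (1 : R)) '' A) ^ k =
      Ideal.span ((fun u => monomial u (1 : R)) '' (k • A)) := by
  induction k with
  | zero => simp [Ideal.one_eq_top]
  | succ k ih =>
    rw [pow_succ, ih, Ideal.span_mul_span', succ_nsmul]
    congr 1
    ext p
    simp [Set.mem_mul, Set.mem_add, monomial_mul]

theorem MvPolynomial.homogeneousSubmodule_inf_span_monomial_image {σ R : Type*}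
    [CommSemiring R] {n : ℕ} {G : Set (σ →₀ ℕ)} (hG : ∀ u ∈ G, u.degree = n) :
    homogeneousSubmodule σ R n ⊓
        (Ideal.span ((fun u => monomial u (1 : R)) '' G)).restrictScalars R =
      AddMonoidAlgebra.supported R R G := by
  ext p
  rw [Submodule.mem_inf, homogeneousSubmodule_eq_finsupp_supported, Submodule.restrictScalars_mem,
    mem_ideal_span_monomial_image, AddMonoidAlgebra.mem_supported, AddMonoidAlgebra.mem_supported]
  constructor
  · rintro ⟨hdeg, hdiv⟩ v hv
    obtain ⟨u, hu, huv⟩ := hdiv v hv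
    rwa [← Finsupp.eq_of_le_of_degree_le huv ((hdeg hv).trans (hG u hu).symm).le]
  · intro hsupp
    exact ⟨fun v hv => hG v (hsupp hv), fun v hv => ⟨v, hsupp hv, le_rfl⟩⟩

theorem hilbertFunction_span_monomial_add_ncard {m n : ℕ} {G : Set (Fin m →₀ ℕ)}
    (hG : ∀ u ∈ G, u.degree = n) :
    hilbertFunction (Ideal.span ((fun u => monomial u (1 : ℂ)) '' G)) n + G.ncard =
      {u : Fin m →₀ ℕ | u.degree = n}.ncard := by
  set J := Ideal.span ((fun u => monomial u (1 : ℂ)) '' G)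
  have hfin := Finsupp.finite_of_degree_eq (σ := Fin m) n
  have hker : LinearMap.ker (Ideal.Quotient.mkₐ ℂ J).toLinearMap = J.restrictScalars ℂ := by
    ext p
    exact Ideal.Quotient.eq_zero_iff_mem
  have : FiniteDimensional ℂ (homogeneousSubmodule (Fin m) ℂ n) :=
    Module.Finite.iff_fg.mpr (homogeneousSubmodule_fg (Fin m) ℂ n)
  have hdim : Module.finrank ℂ (homogeneousSubmodule (Fin m) ℂ n) =
      {u : Fin m →₀ ℕ | u.degree = n}.ncard := by
    rw [homogeneousSubmodule_eq_finsupp_supported, AddMonoidAlgebra.finrank_supported hfin]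
  have := Submodule.finrank_map_add_finrank_inf_ker (Ideal.Quotient.mkₐ ℂ J).toLinearMap
    (homogeneousSubmodule (Fin m) ℂ n)
  rwa [hker, homogeneousSubmodule_inf_span_monomial_image hG,
    AddMonoidAlgebra.finrank_supported (hfin.subset hG), hdim] at this

theorem hilbertFunction_span_monomial_fin_two {n : ℕ} {G : Set (Fin 2 →₀ ℕ)}
    (hG : ∀ u ∈ G, u.degree = n) :
    hilbertFunction (Ideal.span ((fun u => monomial u (1 : ℂ)) '' G)) n =
      (Set.Iic n \ (fun u => u 0) '' G).ncard := by
  have hinj := Finsupp.injOn_apply_zero_degree_eq n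
  have h := hilbertFunction_span_monomial_add_ncard hG
  rw [← hinj.ncard_image, Finsupp.image_apply_zero_degree_eq, ← (hinj.mono hG).ncard_image] at h
  have hsub : (fun u : Fin 2 →₀ ℕ => u 0) '' G ⊆ Set.Iic n :=
    Finsupp.image_apply_zero_degree_eq n ▸ Set.image_mono hG
  have := Set.ncard_sdiff_add_ncard_of_subset hsub (Set.finite_Iic n)
  omega

theorem Set.mem_nsmul_insert_zero_pair {M : Type*} [AddCommMonoid M] {a b x : M} {k : ℕ} :
    x ∈ k • ({0, a, b} : Set M) ↔ ∃ i j, i + j ≤ k ∧ i • a + j • b = x := by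
  induction k generalizing x with
  | zero => simp [eq_comm]
  | succ k ih =>
    simp_rw [succ_nsmul, Set.mem_add, ih]
    constructor
    · rintro ⟨_, ⟨i, j, hij, rfl⟩, z, hz, rfl⟩
      rcases hz with rfl | rfl | rfl
      · exact ⟨i, j, by omega, (add_zero _).symm⟩
      · exact ⟨i + 1, j, by omega, by simp only [succ_nsmul]; abel⟩
      · exact ⟨i, j + 1, by omega, by simp only [succ_nsmul]; abel⟩
    · rintro ⟨i | i, j | j, hij, rfl⟩
      · exact ⟨0, ⟨0, 0, by omega, by simp⟩, 0, by simp, by simp⟩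
      · exact ⟨_, ⟨0, j, by omega, rfl⟩, b, by simp, by simp only [succ_nsmul]; abel⟩
      · exact ⟨_, ⟨i, 0, by omega, rfl⟩, a, by simp, by simp only [succ_nsmul]; abel⟩
      · exact ⟨_, ⟨i, j + 1, by omega, rfl⟩, a, by simp, by simp only [succ_nsmul]; abel⟩

theorem Nat.eq_and_eq_of_mul_add_eq_mul_add {d s s' t t' : ℕ} (ht : t < d) (ht' : t' < d)
    (h : s * d + t = s' * d + t') : s = s' ∧ t = t' := by
  have hd : 0 < d := by omega
  obtain ⟨hq, hr⟩ := (Nat.div_mod_unique (a := s * d + t) (d := s) hd).2 ⟨by ring, ht⟩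
  obtain ⟨hq', hr'⟩ :=
    (Nat.div_mod_unique (a := s * d + t) (d := s') hd).2 ⟨by rw [h]; ring, ht'⟩
  exact ⟨hq.symm.trans hq', hr.symm.trans hr'⟩

/-- `{i(d-1) + jd | i + j ≤ k}` is the union of the intervals `[m(d-1), md]`, `m ≤ k`; an `sd + t`
with `0 < t < d` can only lie in the one with `m = s + 1`. -/
theorem Nat.exists_mul_pred_add_mul_eq_iff {d k s t : ℕ} (ht : t < d) (hle : s * d + t ≤ d * k) :
    (∃ i j, i + j ≤ k ∧ i * (d - 1) + j * d = s * d + t) ↔ t = 0 ∨ d - 1 ≤ s + t := by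
  obtain ⟨D, rfl⟩ : ∃ D, d = D + 1 := ⟨d - 1, by omega⟩
  rw [Nat.add_sub_cancel]
  constructor
  · rintro ⟨i, j, hij, heq⟩
    by_contra! h
    have ht0 : 0 < t := Nat.pos_of_ne_zero h.1
    rcases le_or_gt (i + j) s with hs | hs
    · nlinarith [Nat.mul_le_mul_right (D + 1) hs]
    · nlinarith [Nat.mul_le_mul_right D hs]
  · intro h
    rcases Nat.eq_zero_or_pos t with rfl | ht0
    · exact ⟨0, s, by nlinarith, by ring⟩
    · obtain ⟨j, hj⟩ : ∃ j, s + t = D + j := ⟨s + t - D, by omega⟩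
      obtain ⟨i, hi⟩ : ∃ i, D + 1 = t + i := ⟨D + 1 - t, by omega⟩
      have hsk : s < k := by nlinarith
      exact ⟨i, j, by omega, by nlinarith⟩

theorem Nat.ncard_Iic_mul_sdiff_nsmul {d k : ℕ} (hd : 1 ≤ d) (hk : d - 2 ≤ k) :
    (Set.Iic (d * k) \ k • ({0, d - 1, d} : Set ℕ)).ncard = (d - 1).choose 2 := by
  have hpairs : {p : ℕ × ℕ | p.1 < p.2 ∧ p.2 < d - 1} =
      ↑{p ∈ Finset.range (d - 1) ×ˢ Finset.range (d - 1) | p.1 < p.2} := by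
    ext p
    simp only [Set.mem_ofPred_eq, Finset.coe_filter, Finset.mem_product, Finset.mem_range]
    omega
  have hcompl : Set.Iic (d * k) \ k • ({0, d - 1, d} : Set ℕ) =
      (fun p : ℕ × ℕ => p.1 * d + (p.2 - p.1)) '' {p | p.1 < p.2 ∧ p.2 < d - 1} := by
    ext e
    simp only [Set.mem_sdiff, Set.mem_Iic, Set.mem_image, Set.mem_ofPred_eq, Prod.exists,
      Set.mem_nsmul_insert_zero_pair, smul_eq_mul]
    constructor
    · rintro ⟨hle, hE⟩
      obtain ⟨s, t, ht, rfl⟩ : ∃ s t, t < d ∧ e = s * d + t :=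
        ⟨e / d, e % d, Nat.mod_lt e hd, (Nat.div_add_mod' e d).symm⟩
      rw [Nat.exists_mul_pred_add_mul_eq_iff ht hle] at hE
      exact ⟨s, s + t, by omega, by rw [Nat.add_sub_cancel_left]⟩
    · rintro ⟨i, j, ⟨hij, hj⟩, rfl⟩
      have hle : i * d + (j - i) ≤ d * k := by
        have : j - i < d := by omega
        nlinarith [Nat.mul_le_mul_right d (show i + 1 ≤ k by omega)]
      rw [Nat.exists_mul_pred_add_mul_eq_iff (by omega) hle]
      omega
  rw [hcompl, Set.InjOn.ncard_image, hpairs, Set.ncard_coe_finset,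
    Finset.card_product_filter_lt, Finset.card_range]
  rintro ⟨i, j⟩ ⟨hij, hj⟩ ⟨i', j'⟩ ⟨hij', hj'⟩ h
  dsimp only at h hij hj hij' hj'
  obtain ⟨rfl, h'⟩ := Nat.eq_and_eq_of_mul_add_eq_mul_add (by omega) (by omega) h
  simp only [Prod.mk.injEq, true_and]
  omega

theorem stmt_14 (d k : ℕ) (hd : 3 ≤ d) (hk : d - 2 ≤ k) :
    hilbertFunction
      ((Ideal.span {(X 0 : MvPolynomial (Fin 2) ℂ) ^ d, (X 1 : MvPolynomial (Fin 2) ℂ) ^ d,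
          (X 0 : MvPolynomial (Fin 2) ℂ) ^ (d - 1) * X 1}) ^ k) (d * k)
      = Nat.choose (d - 1) 2 := by
  set A : Set (Fin 2 →₀ ℕ) :=
    {Finsupp.single 0 d, Finsupp.single 1 d, Finsupp.single 0 (d - 1) + Finsupp.single 1 1}
  have hgen : {(X 0 : MvPolynomial (Fin 2) ℂ) ^ d, X 1 ^ d, X 0 ^ (d - 1) * X 1} =
      (fun u => monomial u (1 : ℂ)) '' A := by
    rw [X_pow_eq_monomial, X_pow_eq_monomial, X_pow_eq_monomial, X, monomial_mul, one_mul]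
    simp only [A, Set.image_insert_eq, Set.image_singleton]
  have hdeg : ∀ u ∈ A, u.degree = d := by
    simp only [A, Set.mem_insert_iff, Set.mem_singleton_iff, forall_eq_or_imp, forall_eq,
      map_add, Finsupp.degree_single, true_and]
    omega
  have hx : (fun u : Fin 2 →₀ ℕ => u 0) '' (k • A) = k • {0, d - 1, d} := by
    rw [show (fun u : Fin 2 →₀ ℕ => u 0) = Finsupp.applyAddHom 0 from rfl, Set.image_nsmul,
      Set.pair_comm (d - 1), Set.insert_comm 0 d]
    simp [A, Set.image_insert_eq]
  rw [hgen, span_monomial_image_pow, hilbertFunction_span_monomial_fin_two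
    (fun u hu => (Finsupp.degree_eq_of_mem_nsmul hdeg u hu).trans (mul_comm k d)), hx,
    Nat.ncard_Iic_mul_sdiff_nsmul (by omega) hk]
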